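/- Let V ⊆ ℝ² be open (variables (ξ,ζ)) and let B, C, D : V → ℝ be continuous, and let h̄, k : V → ℝ be continuously differentiable and satisfy at every point of V: ζ·(B·h̄_ξ + D·h̄_ζ) + h̄ + k_ξ = 0 and ζ·(C·h̄_ξ − B·h̄_ζ) + k_ζ = 0. Let Ω ⊆ ℝ² be open (space-time variables (x,t)) and let (ξ, ζ, η) : Ω → ℝ³ be continuously differentiable with η > 0 and (ξ,ζ) ∈ V, satisfying pointwise ξ_t = (ζ/η)·(B(ξ,ζ)·ξ_x + C(ξ,ζ)·ζ_x), ζ_t = (ζ/η)·(D(ξ,ζ)·ξ_x − B(ξ,ζ)·ζ_x), and η_t = ξ_x. Then ∂_t[ η·h̄(ξ,ζ) ] + ∂_x[ k(ξ,ζ) ] = 0 at every point of Ω. -/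

import Mathlib

/-! By the product and chain rules,
`∂ₜ(η h̄) + ∂ₓk = ηₜ h̄ + η (h̄_ξ ξₜ + h̄_ζ ζₜ) + k_ξ ξₓ + k_ζ ζₓ`.
Substituting the particle-path equations, `η` cancels against the factor `ζ/η`, and the
expression becomes `ξₓ` times the first compatibility relation plus `ζₓ` times the second. -/

theorem ContinuousLinearMap.apply_prod_eq_smul_add_smul {R M : Type*} [Semiring R]
    [TopologicalSpace R] [AddCommMonoid M] [TopologicalSpace M] [Module R M]
    (L : R × R →L[R] M) (p s : R) :
    L (p, s) = p • L (1, 0) + s • L (0, 1) := by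
  rw [← map_smul, ← map_smul, ← map_add, Prod.smul_mk, Prod.smul_mk, Prod.mk_add_mk]
  simp

theorem fderiv_comp_prodMk_apply {𝕜 E F : Type*} [NontriviallyNormedField 𝕜]
    [NormedAddCommGroup E] [NormedSpace 𝕜 E] [NormedAddCommGroup F] [NormedSpace 𝕜 F]
    {f : 𝕜 × 𝕜 → F} {u v : E → 𝕜} {q : E}
    (hf : DifferentiableAt 𝕜 f (u q, v q)) (hu : DifferentiableAt 𝕜 u q)
    (hv : DifferentiableAt 𝕜 v q) (w : E) :
    fderiv 𝕜 (fun r => f (u r, v r)) q w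
      = fderiv 𝕜 u q w • fderiv 𝕜 f (u q, v q) (1, 0)
        + fderiv 𝕜 v q w • fderiv 𝕜 f (u q, v q) (0, 1) := by
  rw [fderiv_fun_comp q hf (hu.prodMk hv), DifferentiableAt.fderiv_prodMk hu hv]
  exact ContinuousLinearMap.apply_prod_eq_smul_add_smul _ _ _

theorem particle_path_balance {b c d z e h hξ hζ kξ kζ ξx ζx ξt ζt ηt : ℝ}
    (hrel1 : z * (b * hξ + d * hζ) + h + kξ = 0) (hrel2 : z * (c * hξ - b * hζ) + kζ = 0)
    (he : e ≠ 0) (hξt : ξt = z / e * (b * ξx + c * ζx))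
    (hζt : ζt = z / e * (d * ξx - b * ζx)) (hηt : ηt = ξx) :
    e * (ξt * hξ + ζt * hζ) + h * ηt + (ξx * kξ + ζx * kζ) = 0 := by
  rw [hξt, hζt, hηt]
  field_simp
  linear_combination ξx * hrel1 + ζx * hrel2

theorem particle_path_conservation_form_general
    (V : Set (ℝ × ℝ)) (hV : IsOpen V)
    (B C D : ℝ × ℝ → ℝ)
    (hbar k : ℝ × ℝ → ℝ)
    (hhbar : ContDiffOn ℝ 1 hbar V) (hk : ContDiffOn ℝ 1 k V)
    (hrel1 : ∀ r ∈ V, r.2 * (B r * fderiv ℝ hbar r (1, 0) + D r * fderiv ℝ hbar r (0, 1))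
      + hbar r + fderiv ℝ k r (1, 0) = 0)
    (hrel2 : ∀ r ∈ V, r.2 * (C r * fderiv ℝ hbar r (1, 0) - B r * fderiv ℝ hbar r (0, 1))
      + fderiv ℝ k r (0, 1) = 0)
    (Ω : Set (ℝ × ℝ)) (hΩ : IsOpen Ω)
    (ξ ζ η : ℝ × ℝ → ℝ)
    (hξ : ContDiffOn ℝ 1 ξ Ω) (hζ : ContDiffOn ℝ 1 ζ Ω) (hη : ContDiffOn ℝ 1 η Ω)
    (hηpos : ∀ q ∈ Ω, 0 < η q) (hmem : ∀ q ∈ Ω, (ξ q, ζ q) ∈ V)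
    (heq1 : ∀ q ∈ Ω, fderiv ℝ ξ q (0, 1)
      = (ζ q / η q) * (B (ξ q, ζ q) * fderiv ℝ ξ q (1, 0)
          + C (ξ q, ζ q) * fderiv ℝ ζ q (1, 0)))
    (heq2 : ∀ q ∈ Ω, fderiv ℝ ζ q (0, 1)
      = (ζ q / η q) * (D (ξ q, ζ q) * fderiv ℝ ξ q (1, 0)
          - B (ξ q, ζ q) * fderiv ℝ ζ q (1, 0)))
    (heq3 : ∀ q ∈ Ω, fderiv ℝ η q (0, 1) = fderiv ℝ ξ q (1, 0)) :
    ∀ q ∈ Ω,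
      fderiv ℝ (fun r => η r * hbar (ξ r, ζ r)) q (0, 1)
        + fderiv ℝ (fun r => k (ξ r, ζ r)) q (1, 0) = 0 := by
  intro q hq
  have hr := hmem q hq
  have diffΩ {f : ℝ × ℝ → ℝ} (hf : ContDiffOn ℝ 1 f Ω) : DifferentiableAt ℝ f q :=
    (hf.contDiffAt (hΩ.mem_nhds hq)).differentiableAt one_ne_zero
  have diffV {f : ℝ × ℝ → ℝ} (hf : ContDiffOn ℝ 1 f V) : DifferentiableAt ℝ f (ξ q, ζ q) :=
    (hf.contDiffAt (hV.mem_nhds hr)).differentiableAt one_ne_zero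
  have hbar_comp : DifferentiableAt ℝ (fun r => hbar (ξ r, ζ r)) q :=
    (diffV hhbar).comp q ((diffΩ hξ).prodMk (diffΩ hζ))
  rw [fderiv_fun_mul (diffΩ hη) hbar_comp, add_apply, smul_apply, smul_apply,
    fderiv_comp_prodMk_apply (diffV hhbar) (diffΩ hξ) (diffΩ hζ),
    fderiv_comp_prodMk_apply (diffV hk) (diffΩ hξ) (diffΩ hζ)]
  simp only [smul_eq_mul]
  exact particle_path_balance (hrel1 _ hr) (hrel2 _ hr) (hηpos q hq).ne'
    (heq1 q hq) (heq2 q hq) (heq3 q hq)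

/-- **Proposition 5.** If `(h̄, k)` solve the first-order compatibility
system `ζ(B h̄_ξ + D h̄_ζ) + h̄ + k_ξ = 0`, `ζ(C h̄_ξ − B h̄_ζ) + k_ζ = 0` on an open
`V ⊆ ℝ²`, then along every `C¹` solution `(ξ,ζ,η)` with `η > 0` of the particle-path
system `ξ_t = (ζ/η)(B ξ_x + C ζ_x)`, `ζ_t = (ζ/η)(D ξ_x − B ζ_x)`, `η_t = ξ_x` one has
the conservation law `∂_t[η·h̄(ξ,ζ)] + ∂_x[k(ξ,ζ)] = 0`. -/
theorem particle_path_conservation_form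
    (V : Set (ℝ × ℝ)) (hV : IsOpen V)
    (B C D : ℝ × ℝ → ℝ)
    (hB : ContinuousOn B V) (hC : ContinuousOn C V) (hD : ContinuousOn D V)
    (hbar k : ℝ × ℝ → ℝ)
    (hhbar : ContDiffOn ℝ 1 hbar V) (hk : ContDiffOn ℝ 1 k V)
    (hrel1 : ∀ r ∈ V, r.2 * (B r * fderiv ℝ hbar r (1, 0) + D r * fderiv ℝ hbar r (0, 1))
      + hbar r + fderiv ℝ k r (1, 0) = 0)
    (hrel2 : ∀ r ∈ V, r.2 * (C r * fderiv ℝ hbar r (1, 0) - B r * fderiv ℝ hbar r (0, 1))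
      + fderiv ℝ k r (0, 1) = 0)
    (Ω : Set (ℝ × ℝ)) (hΩ : IsOpen Ω)
    (ξ ζ η : ℝ × ℝ → ℝ)
    (hξ : ContDiffOn ℝ 1 ξ Ω) (hζ : ContDiffOn ℝ 1 ζ Ω) (hη : ContDiffOn ℝ 1 η Ω)
    (hηpos : ∀ q ∈ Ω, 0 < η q) (hmem : ∀ q ∈ Ω, (ξ q, ζ q) ∈ V)
    (heq1 : ∀ q ∈ Ω, fderiv ℝ ξ q (0, 1)
      = (ζ q / η q) * (B (ξ q, ζ q) * fderiv ℝ ξ q (1, 0)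
          + C (ξ q, ζ q) * fderiv ℝ ζ q (1, 0)))
    (heq2 : ∀ q ∈ Ω, fderiv ℝ ζ q (0, 1)
      = (ζ q / η q) * (D (ξ q, ζ q) * fderiv ℝ ξ q (1, 0)
          - B (ξ q, ζ q) * fderiv ℝ ζ q (1, 0)))
    (heq3 : ∀ q ∈ Ω, fderiv ℝ η q (0, 1) = fderiv ℝ ξ q (1, 0)) :
    ∀ q ∈ Ω,
      fderiv ℝ (fun r => η r * hbar (ξ r, ζ r)) q (0, 1)
        + fderiv ℝ (fun r => k (ξ r, ζ r)) q (1, 0) = 0 :=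
  particle_path_conservation_form_general V hV B C D hbar k hhbar hk hrel1 hrel2 Ω hΩ ξ ζ η hξ hζ hη
    hηpos hmem heq1 heq2 heq3
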